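/- For a nonempty subset B ⊊ X of an energy landscape, the maximum depth of B, defined as the maximum over maximal cycles C ⊆ B of the depth Γ(C), equals max_{x∈B} { min_{y ∈ X∖B} Φ(x,y) − H(x) }. -/

import Mathlib

/- Abstract energy landscape: finite state space `X`, energy `H`, connectivity `q`. -/

variable {X : Type*}

/-- A path from `x` to `y`: a nonempty finite sequence of states with consecutive
states connected by `q`. -/
def IsPath (q : X → X → Prop) (ω : List X) (x y : X) : Prop :=
  ω ≠ [] ∧ ω.Chain' q ∧ ω.head? = some x ∧ ω.getLast? = some y

/-- The elevation (height) of a path: the maximal energy along it. -/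
noncomputable def elev (H : X → ℝ) (ω : List X) : ℝ :=
  sSup (H '' {z | z ∈ ω})

/-- The communication energy between two states: the minimal elevation over paths. -/
noncomputable def commE (H : X → ℝ) (q : X → X → Prop) (x y : X) : ℝ :=
  sInf {e | ∃ ω, IsPath q ω x y ∧ elev H ω = e}

/-- The communication energy between two sets of states. -/
noncomputable def commSet (H : X → ℝ) (q : X → X → Prop) (A B : Set X) : ℝ :=
  sInf {e | ∃ x ∈ A, ∃ y ∈ B, commE H q x y = e}

/-- A set of states is connected if any two of its states are joined by a path inside it. -/
def SetConn (q : X → X → Prop) (C : Set X) : Prop :=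
  ∀ x ∈ C, ∀ y ∈ C, ∃ ω, IsPath q ω x y ∧ ∀ z ∈ ω, z ∈ C

/-- The external boundary of a set of states. -/
def extBdry (q : X → X → Prop) (C : Set X) : Set X :=
  {y | y ∉ C ∧ ∃ x ∈ C, q x y}

/-- A non-trivial cycle: a connected set whose maximal internal energy is strictly
below the minimal energy on its external boundary. -/
def IsNontrivialCycle (H : X → ℝ) (q : X → X → Prop) (C : Set X) : Prop :=
  C.Nonempty ∧ SetConn q C ∧ sSup (H '' C) < sInf (H '' extBdry q C)

/-- A cycle: a singleton, or a non-trivial cycle. -/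
def IsCycle (H : X → ℝ) (q : X → X → Prop) (C : Set X) : Prop :=
  (∃ x, C = {x}) ∨ IsNontrivialCycle H q C

/-- The communication energy between a state and a set of states. -/
noncomputable def commA (H : X → ℝ) (q : X → X → Prop) (x : X) (A : Set X) : ℝ :=
  sInf {e | ∃ y ∈ A, commE H q x y = e}

/-- `C` is a maximal cycle contained in `B`. -/
def MaxCycleIn (H : X → ℝ) (q : X → X → Prop) (B C : Set X) : Prop :=
  IsCycle H q C ∧ C ⊆ B ∧ ∀ C', IsCycle H q C' → C' ⊆ B → C ⊆ C' → C' = C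

/-- The depth of a cycle, `Γ(C) = Φ(C, X∖C) − min_{x∈C} H(x)`
(valid for trivial and non-trivial cycles alike). -/
noncomputable def depth (H : X → ℝ) (q : X → X → Prop) (C : Set X) : ℝ :=
  commSet H q C Cᶜ - sInf (H '' C)

/-- The maximum depth of a set: the maximum depth of a maximal cycle contained in it. -/
noncomputable def maxDepth (H : X → ℝ) (q : X → X → Prop) (B : Set X) : ℝ :=
  sSup {d | ∃ C, MaxCycleIn H q B C ∧ depth H q C = d}

/-!
For `≤`: if `C ⊆ B` is a maximal cycle and `x` minimises `H` on `C`, every exit from `x`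
out of `B` also leaves `C`, so `Φ(C, Cᶜ) − min_C H ≤ Φ(x, Bᶜ) − H x`.

For `≥`: given `x ∈ B`, let `C ∋ x` be a maximal cycle in `B` and `Λ = Φ(C, Cᶜ)`. The states
reachable from `x` through states of energy `≤ Λ` form a connected set containing `C` and a
point outside `C`, and every state on its boundary has energy `> Λ`. If this set stayed inside
`B` it would be a cycle in `B` strictly larger than `C`; hence `x` reaches `Bᶜ` below `Λ`,
and `Φ(x, Bᶜ) − H x ≤ Λ − min_C H`.
-/

open Relation

def ReachIn (q : X → X → Prop) (S : Set X) (x y : X) : Prop :=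
  x ∈ S ∧ ReflTransGen (fun a b => q a b ∧ b ∈ S) x y

namespace ReachIn
variable {q : X → X → Prop} {S T C : Set X} {x y z : X}

lemma refl (hx : x ∈ S) : ReachIn q S x x := ⟨hx, .refl⟩

lemma tail (h : ReachIn q S x y) (hyz : q y z) (hz : z ∈ S) : ReachIn q S x z :=
  ⟨h.1, h.2.tail ⟨hyz, hz⟩⟩

lemma trans (hxy : ReachIn q S x y) (hyz : ReachIn q S y z) : ReachIn q S x z :=
  ⟨hxy.1, hxy.2.trans hyz.2⟩

lemma mem_right (h : ReachIn q S x y) : y ∈ S := by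
  obtain ⟨hx, h⟩ := h
  cases h.cases_tail with
  | inl h => exact h ▸ hx
  | inr h => obtain ⟨_, -, -, hy⟩ := h; exact hy

lemma symm (hsymm : ∀ a b, q a b → q b a) (h : ReachIn q S x y) : ReachIn q S y x := by
  obtain ⟨hx, h⟩ := h
  induction h with
  | refl => exact refl hx
  | tail _ hbc ih => exact ((refl hbc.2).tail (hsymm _ _ hbc.1) ih.1).trans ih

lemma mono (hST : S ⊆ T) (h : ReachIn q S x y) : ReachIn q T x y :=
  ⟨hST h.1, ReflTransGen.mono (fun _ _ hab => ⟨hab.1, hST hab.2⟩) _ _ h.2⟩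

lemma exists_mem_extBdry (h : ReachIn q S x y) (hx : x ∈ C) (hy : y ∉ C) :
    ∃ w ∈ extBdry q C, w ∈ S := by
  obtain ⟨-, h⟩ := h
  induction h with
  | refl => exact absurd hx hy
  | @tail b c _ hbc ih =>
    by_cases hb : b ∈ C
    · exact ⟨c, ⟨hy, b, hb, hbc.1⟩, hbc.2⟩
    · exact ih hb

lemma restrict_setOf_reachIn (hxy : ReachIn q S x y) (hyz : ReachIn q S y z) :
    ReachIn q {u | ReachIn q S x u} y z := by
  obtain ⟨-, h⟩ := hyz
  induction h with
  | refl => exact refl hxy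
  | tail _ hbc ih => exact ih.tail hbc.1 (ih.mem_right.tail hbc.1 hbc.2)

end ReachIn

section paths
variable {q : X → X → Prop} {S C : Set X} {x y : X}

lemma IsPath.ne_nil {ω : List X} (h : IsPath q ω x y) : ω ≠ [] := h.1

lemma isPath_iff_head_getLast {ω : List X} :
    IsPath q ω x y ↔ ∃ hω : ω ≠ [], ω.IsChain q ∧ ω.head hω = x ∧ ω.getLast hω = y := by
  constructor
  · rintro ⟨hω, hc, hh, hl⟩
    exact ⟨hω, hc, by simpa [List.head?_eq_some_head hω] using hh,
      by simpa [List.getLast?_eq_some_getLast hω] using hl⟩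
  · rintro ⟨hω, hc, rfl, rfl⟩
    exact ⟨hω, hc, List.head?_eq_some_head hω, List.getLast?_eq_some_getLast hω⟩

lemma exists_isPath_subset_iff_reachIn :
    (∃ ω, IsPath q ω x y ∧ ∀ z ∈ ω, z ∈ S) ↔ ReachIn q S x y := by
  constructor
  · rintro ⟨ω, hω, hS⟩
    obtain ⟨hne, hc, rfl, rfl⟩ := isPath_iff_head_getLast.mp hω
    refine ⟨hS _ (List.head_mem hne), List.relationReflTransGen_of_exists_isChain ω ?_ hne⟩
    exact hc.imp_of_mem_imp fun a b _ hb hab => ⟨hab, hS b hb⟩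
  · rintro ⟨hx, h⟩
    obtain ⟨ω, hne, hc, hh, hl⟩ := List.exists_isChain_ne_nil_of_relationReflTransGen h
    refine ⟨ω, isPath_iff_head_getLast.mpr ⟨hne, hc.imp fun _ _ h => h.1, hh, hl⟩, ?_⟩
    exact hc.induction (· ∈ S) ω (fun _ _ h _ => h.2) fun _ => hh ▸ hx

lemma SetConn.reachIn (hC : SetConn q C) (hCS : C ⊆ S) (hx : x ∈ C) (hy : y ∈ C) :
    ReachIn q S x y :=
  (exists_isPath_subset_iff_reachIn.mp (hC x hx y hy)).mono hCS

lemma setConn_setOf_reachIn (hsymm : ∀ a b, q a b → q b a) :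
    SetConn q {z | ReachIn q S x z} := fun _ hz _ hw =>
  exists_isPath_subset_iff_reachIn.mpr (hz.restrict_setOf_reachIn ((hz.symm hsymm).trans hw))

lemma extBdry_nonempty (hirr : ∀ a b : X, ∃ ω, IsPath q ω a b) (hx : x ∈ C) (hy : y ∉ C) :
    (extBdry q C).Nonempty := by
  obtain ⟨ω, hω⟩ := hirr x y
  obtain ⟨w, hw, -⟩ := (exists_isPath_subset_iff_reachIn (S := Set.univ).mp
    ⟨ω, hω, fun _ _ => trivial⟩).exists_mem_extBdry hx hy
  exact ⟨w, hw⟩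

end paths

section elevation
variable {H : X → ℝ} {ω : List X} {b : ℝ}

lemma elev_le_iff (hω : ω ≠ []) : elev H ω ≤ b ↔ ∀ z ∈ ω, H z ≤ b := by
  obtain ⟨a, ha⟩ := List.exists_mem_of_ne_nil ω hω
  rw [elev, csSup_le_iff (ω.finite_toSet.image H).bddAbove ⟨H a, a, ha, rfl⟩]
  simp

lemma elev_mem_range (hω : ω ≠ []) : elev H ω ∈ Set.range H := by
  obtain ⟨a, ha⟩ := List.exists_mem_of_ne_nil ω hω
  obtain ⟨z, -, hz⟩ := (Set.Nonempty.image H ⟨a, ha⟩).csSup_mem (ω.finite_toSet.image H)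
  exact ⟨z, hz⟩

end elevation

section communication
variable [Finite X] {H : X → ℝ} {q : X → X → Prop} {A A' : Set X} {x y : X} {Λ : ℝ}

lemma finite_elev_isPath (x y : X) : {e | ∃ ω, IsPath q ω x y ∧ elev H ω = e}.Finite := by
  refine (Set.finite_range H).subset ?_
  rintro _ ⟨ω, hω, rfl⟩
  exact elev_mem_range hω.ne_nil

lemma commE_le_elev {ω : List X} (hω : IsPath q ω x y) : commE H q x y ≤ elev H ω :=
  csInf_le (finite_elev_isPath x y).bddBelow ⟨ω, hω, rfl⟩

lemma exists_isPath_elev_eq_commE (hirr : ∀ a b : X, ∃ ω, IsPath q ω a b) (x y : X) :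
    ∃ ω, IsPath q ω x y ∧ elev H ω = commE H q x y := by
  obtain ⟨ω, hω⟩ := hirr x y
  have hne : {e | ∃ ω, IsPath q ω x y ∧ elev H ω = e}.Nonempty := ⟨elev H ω, ω, hω, rfl⟩
  exact hne.csInf_mem (finite_elev_isPath x y)

lemma commE_le_iff_reachIn (hirr : ∀ a b : X, ∃ ω, IsPath q ω a b) :
    commE H q x y ≤ Λ ↔ ReachIn q {u | H u ≤ Λ} x y := by
  rw [← exists_isPath_subset_iff_reachIn]
  constructor
  · intro h
    obtain ⟨ω, hω, helev⟩ := exists_isPath_elev_eq_commE hirr x y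
    exact ⟨ω, hω, (elev_le_iff hω.ne_nil).mp (helev ▸ h)⟩
  · rintro ⟨ω, hω, hle⟩
    exact (commE_le_elev hω).trans ((elev_le_iff hω.ne_nil).mpr hle)

lemma commA_le_commE (hy : y ∈ A) : commA H q x A ≤ commE H q x y :=
  csInf_le ((Set.toFinite A).image _).bddBelow ⟨y, hy, rfl⟩

lemma exists_commE_eq_commA (hA : A.Nonempty) : ∃ y ∈ A, commE H q x y = commA H q x A :=
  (hA.image _).csInf_mem (Set.toFinite _)

lemma commSet_le_commE (hx : x ∈ A) (hy : y ∈ A') : commSet H q A A' ≤ commE H q x y :=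
  csInf_le ((Set.toFinite A).image2 _ (Set.toFinite A')).bddBelow ⟨x, hx, y, hy, rfl⟩

lemma exists_commE_eq_commSet (hA : A.Nonempty) (hA' : A'.Nonempty) :
    ∃ x ∈ A, ∃ y ∈ A', commE H q x y = commSet H q A A' :=
  (hA.image2 hA').csInf_mem (Set.toFinite _)

end communication

section cycles
variable {H : X → ℝ} {q : X → X → Prop} {B C : Set X} {x x' y' : X} {Λ : ℝ}

lemma IsCycle.nonempty (hC : IsCycle H q C) : C.Nonempty := by
  rcases hC with ⟨c, rfl⟩ | hC
  · exact Set.singleton_nonempty c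
  · exact hC.1

lemma IsCycle.setConn (hC : IsCycle H q C) : SetConn q C := by
  rcases hC with ⟨c, rfl⟩ | hC
  · intro x hx y hy
    obtain rfl : x = y := hx.trans hy.symm
    exact ⟨[x], ⟨List.cons_ne_nil x [], List.isChain_singleton x, rfl, rfl⟩, by simpa using hx⟩
  · exact hC.2.1

variable [Finite X]

lemma IsCycle.subset_of_reachIn_compl (hC : IsCycle H q C) (hx' : x' ∈ C) (hy' : y' ∉ C)
    (h : ReachIn q {u | H u ≤ Λ} x' y') : C ⊆ {u | H u ≤ Λ} := by
  rcases hC with ⟨c, rfl⟩ | ⟨-, -, hlt⟩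
  · exact Set.singleton_subset_iff.mpr (hx' ▸ h.1)
  · intro z hz
    obtain ⟨w, hw, hwΛ⟩ := h.exists_mem_extBdry hx' hy'
    calc H z ≤ sSup (H '' C) := le_csSup ((Set.toFinite C).image H).bddAbove ⟨z, hz, rfl⟩
      _ ≤ sInf (H '' extBdry q C) := hlt.le
      _ ≤ H w := csInf_le ((Set.toFinite _).image H).bddBelow ⟨w, hw, rfl⟩
      _ ≤ Λ := hwΛ

lemma isNontrivialCycle_setOf_reachIn (hsymm : ∀ a b, q a b → q b a) (hx : H x ≤ Λ)
    (hbd : (extBdry q {z | ReachIn q {u | H u ≤ Λ} x z}).Nonempty) :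
    IsNontrivialCycle H q {z | ReachIn q {u | H u ≤ Λ} x z} := by
  set D := {z | ReachIn q {u | H u ≤ Λ} x z}
  refine ⟨⟨x, ReachIn.refl hx⟩, setConn_setOf_reachIn hsymm, ?_⟩
  obtain ⟨w, ⟨hwD, z, hz, hzw⟩, hw⟩ := (hbd.image H).csInf_mem ((Set.toFinite _).image H)
  have hsup : sSup (H '' D) ≤ Λ :=
    csSup_le ⟨H x, x, ReachIn.refl hx, rfl⟩ (by rintro _ ⟨u, hu, rfl⟩; exact hu.mem_right)
  have hwΛ : Λ < H w := lt_of_not_ge fun hle => hwD (hz.tail hzw hle)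
  exact hw ▸ hsup.trans_lt hwΛ

lemma exists_maxCycleIn (hx : x ∈ B) : ∃ C, MaxCycleIn H q B C ∧ x ∈ C := by
  have hne : {C : Set X | IsCycle H q C ∧ C ⊆ B ∧ x ∈ C}.Nonempty :=
    ⟨{x}, Or.inl ⟨x, rfl⟩, Set.singleton_subset_iff.mpr hx, rfl⟩
  obtain ⟨C, ⟨hC, hCB, hxC⟩, hmax⟩ := (Set.toFinite _).exists_maximalFor id _ hne
  exact ⟨C, ⟨hC, hCB, fun C' hC' hC'B hCC' => (hmax ⟨hC', hC'B, hCC' hxC⟩ hCC').antisymm hCC'⟩,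
    hxC⟩

lemma MaxCycleIn.exists_reachIn_compl (hsymm : ∀ a b, q a b → q b a)
    (hirr : ∀ a b : X, ∃ ω, IsPath q ω a b) (hBne : B ≠ Set.univ) (hC : MaxCycleIn H q B C)
    (hx : x ∈ C) : ∃ y ∉ B, ReachIn q {u | H u ≤ commSet H q C Cᶜ} x y := by
  obtain ⟨b, hb⟩ := (Set.ne_univ_iff_exists_notMem B).mp hBne
  obtain ⟨hcyc, hCB, hmax⟩ := hC
  obtain ⟨x', hx', y', hy', hΛ⟩ :=
    exists_commE_eq_commSet (H := H) (q := q) (A' := Cᶜ) ⟨x, hx⟩ ⟨b, fun hbC => hb (hCB hbC)⟩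
  have hexit := (commE_le_iff_reachIn hirr).mp hΛ.le
  have hCΛ := hcyc.subset_of_reachIn_compl hx' hy' hexit
  set D := {z | ReachIn q {u | H u ≤ commSet H q C Cᶜ} x z}
  have hCD : C ⊆ D := fun z hz => hcyc.setConn.reachIn hCΛ hx hz
  by_contra! hDB
  have hDB : D ⊆ B := fun z hz => by_contra fun hzB => hDB z hzB hz
  have hD : IsCycle H q D := Or.inr <| isNontrivialCycle_setOf_reachIn hsymm (hCΛ hx)
    (extBdry_nonempty hirr (hCD hx) fun hbD => hb (hDB hbD))
  exact hy' (hmax D hD hDB hCD ▸ (hCD hx').trans hexit)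

lemma exists_depth_le_commA_sub (hC : C.Nonempty) (hCB : C ⊆ B) (hBne : B ≠ Set.univ) :
    ∃ x ∈ C, depth H q C ≤ commA H q x Bᶜ - H x := by
  obtain ⟨x, hx, hxmin⟩ := (hC.image H).csInf_mem ((Set.toFinite C).image H)
  obtain ⟨y, hyB, hy⟩ := exists_commE_eq_commA (H := H) (q := q) (x := x)
    (Set.nonempty_compl.mpr hBne)
  refine ⟨x, hx, ?_⟩
  rw [depth, ← hxmin, ← hy]
  exact sub_le_sub_right (commSet_le_commE (A' := Cᶜ) hx fun hyC => hyB (hCB hyC)) _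

lemma MaxCycleIn.commA_sub_le_depth (hsymm : ∀ a b, q a b → q b a)
    (hirr : ∀ a b : X, ∃ ω, IsPath q ω a b) (hBne : B ≠ Set.univ) (hC : MaxCycleIn H q B C)
    (hx : x ∈ C) : commA H q x Bᶜ - H x ≤ depth H q C := by
  obtain ⟨y, hyB, hxy⟩ := hC.exists_reachIn_compl hsymm hirr hBne hx
  have hmin : sInf (H '' C) ≤ H x := csInf_le ((Set.toFinite C).image H).bddBelow ⟨x, hx, rfl⟩
  exact sub_le_sub ((commA_le_commE hyB).trans ((commE_le_iff_reachIn hirr).mpr hxy)) hmin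

end cycles

theorem max_depth_characterization_general [Fintype X] (H : X → ℝ) (q : X → X → Prop)
    (hsymm : ∀ x y, q x y → q y x)
    (hirr : ∀ x y : X, ∃ ω, IsPath q ω x y)
    (B : Set X) (hBne : B ≠ Set.univ) :
    maxDepth H q B = sSup {d | ∃ x ∈ B, commA H q x Bᶜ - H x = d} := by
  apply csSup_eq_csSup_of_forall_exists_le
  · rintro _ ⟨C, hC, rfl⟩
    obtain ⟨x, hx, hle⟩ := exists_depth_le_commA_sub hC.1.nonempty hC.2.1 hBne
    exact ⟨_, ⟨x, hC.2.1 hx, rfl⟩, hle⟩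
  · rintro _ ⟨x, hx, rfl⟩
    obtain ⟨C, hC, hxC⟩ := exists_maxCycleIn hx
    exact ⟨_, ⟨C, hC, rfl⟩, hC.commA_sub_le_depth hsymm hirr hBne hxC⟩

/-- equivalent characterization of the maximum depth,
`Γ̃(B) = max_{x∈B} { min_{y∈X∖B} Φ(x,y) − H(x) }`. -/
theorem max_depth_characterization [Fintype X] (H : X → ℝ) (q : X → X → Prop)
    (hsymm : ∀ x y, q x y → q y x)
    (hirr : ∀ x y : X, ∃ ω, IsPath q ω x y)
    (B : Set X) (hB : B.Nonempty) (hBne : B ≠ Set.univ) :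
    maxDepth H q B = sSup {d | ∃ x ∈ B, commA H q x Bᶜ - H x = d} :=
  max_depth_characterization_general H q hsymm hirr B hBne
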